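/- Suppose each B_j(x) is symmetric positive definite and each f_j is strictly convex, and let Δ > 0. Then t(x,Δ) ≤ 0 always, and t(x,Δ) < 0 holds if and only if x is a non-critical point of (MOP); equivalently, t(x,Δ) = 0 if and only if x is a critical point of (MOP). -/

import Mathlib

open scoped RealInnerProductSpace

open Filter Topology

lemma lim_f {n : ℕ} (f : EuclideanSpace ℝ (Fin n) → ℝ) (hf : ContDiff ℝ 1 f)
    (x d : EuclideanSpace ℝ (Fin n)) :
    Tendsto (fun α : ℝ => (f (x + α • d) - f x) / α) (𝓝[>] (0:ℝ))
      (𝓝 ⟪gradient f x, d⟫) := by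
  have hdiff : DifferentiableAt ℝ f x := (hf.differentiable one_ne_zero).differentiableAt
  have hgrad : HasGradientAt f (gradient f x) x := hdiff.hasGradientAt
  have hfd : HasFDerivAt f (InnerProductSpace.toDual ℝ _ (gradient f x)) x :=
    hasGradientAt_iff_hasFDerivAt.mp hgrad
  have hline : HasDerivAt (fun α : ℝ => x + α • d) d 0 := by
    simpa using ((hasDerivAt_id (0:ℝ)).smul_const d).const_add x
  have hcomp : HasDerivAt (fun α : ℝ => f (x + α • d)) ⟪gradient f x, d⟫ 0 := by
    have hfd' : HasFDerivAt f (InnerProductSpace.toDual ℝ _ (gradient f x)) (x + (0:ℝ) • d) := by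
      simpa using hfd
    have := hfd'.comp_hasDerivAt 0 hline
    simpa [InnerProductSpace.toDual_apply_apply, Function.comp_def] using this
  have := hasDerivAt_iff_tendsto_slope.mp hcomp
  have h2 : Tendsto (slope (fun α : ℝ => f (x + α • d)) 0) (𝓝[>] (0:ℝ))
      (𝓝 ⟪gradient f x, d⟫) :=
    this.mono_left (nhdsWithin_mono _ (fun a ha => ne_of_gt ha))
  refine h2.congr (fun α => ?_)
  simp [slope_def_field, div_eq_inv_mul]

/-- With each `B j` symmetric positive definite and each `f j`
strictly convex, and `Δ > 0`: the optimal value `t(x,Δ) = Q(d(x,Δ))` of the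
trust-region subproblem satisfies `t(x,Δ) ≤ 0`; moreover `t(x,Δ) < 0` iff `x` is
a non-critical point of (MOP), equivalently `t(x,Δ) = 0` iff `x` is critical. -/
theorem optimal_value_nonpos_and_negative_iff_noncritical
    {n m : ℕ} [NeZero m]
    (f g : Fin m → EuclideanSpace ℝ (Fin n) → ℝ)
    (hf_sconv : ∀ j, StrictConvexOn ℝ Set.univ (f j))
    (hf_smooth : ∀ j, ContDiff ℝ 1 (f j))
    (hg_conv : ∀ j, ConvexOn ℝ Set.univ (g j))
    (hg_cont : ∀ j, Continuous (g j))
    (F : Fin m → EuclideanSpace ℝ (Fin n) → ℝ)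
    (hF : ∀ j y, F j y = f j y + g j y)
    (x : EuclideanSpace ℝ (Fin n))
    (B : Fin m → EuclideanSpace ℝ (Fin n) →L[ℝ] EuclideanSpace ℝ (Fin n))
    (hB_symm : ∀ j u v, ⟪B j u, v⟫ = ⟪u, B j v⟫)
    (hB_posdef : ∀ j d, d ≠ 0 → 0 < ⟪d, B j d⟫)
    (Q : EuclideanSpace ℝ (Fin n) → ℝ)
    (hQ : ∀ d, Q d = (Finset.univ : Finset (Fin m)).sup' Finset.univ_nonempty
      (fun j => ⟪gradient (f j) x, d⟫ + (1 / 2) * ⟪d, B j d⟫ + g j (x + d) - g j x))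
    (Δ : ℝ) (hΔ : 0 < Δ)
    (d0 : EuclideanSpace ℝ (Fin n))
    (hd0_feas : ‖d0‖ ≤ Δ)
    (hd0_min : ∀ d', ‖d'‖ ≤ Δ → Q d0 ≤ Q d')
    -- `F' j d` is the one-sided directional derivative of `F j` at `x` in direction `d`
    (F' : Fin m → EuclideanSpace ℝ (Fin n) → ℝ)
    (hF' : ∀ j d, Filter.Tendsto (fun α : ℝ => (F j (x + α • d) - F j x) / α)
      (nhdsWithin 0 (Set.Ioi 0)) (nhds (F' j d))) :
    Q d0 ≤ 0 ∧
      (Q d0 < 0 ↔ ¬ (∀ d : EuclideanSpace ℝ (Fin n), ∃ j, 0 ≤ F' j d)) ∧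
      (Q d0 = 0 ↔ (∀ d : EuclideanSpace ℝ (Fin n), ∃ j, 0 ≤ F' j d)) := by
  -- Q 0 = 0
  have hQ0 : Q 0 = 0 := by
    rw [hQ]
    apply le_antisymm
    · apply Finset.sup'_le
      intro j _
      simp
    · have j := Classical.arbitrary (Fin m)
      have := Finset.le_sup' (f := fun j : Fin m =>
        ⟪gradient (f j) x, (0 : EuclideanSpace ℝ (Fin n))⟫ +
          (1 / 2) * ⟪(0 : EuclideanSpace ℝ (Fin n)), B j 0⟫ + g j (x + 0) - g j x)
        (Finset.mem_univ j)
      simpa using this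
  have h1 : Q d0 ≤ 0 := by
    have := hd0_min 0 (by simpa using hΔ.le)
    rwa [hQ0] at this
  -- convexity of g: quotient monotone bound
  have hgq : ∀ (j : Fin m) (d : EuclideanSpace ℝ (Fin n)) (α : ℝ), α ∈ Set.Ioc (0:ℝ) 1 →
      (g j (x + α • d) - g j x) / α ≤ g j (x + d) - g j x := by
    intro j d α hα
    have hcomb : (1 - α) • x + α • (x + d) = x + α • d := by
      rw [smul_add, sub_smul, one_smul]; abel
    have hconv : g j ((1 - α) • x + α • (x + d)) ≤ (1 - α) • g j x + α • g j (x + d) :=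
      (hg_conv j).2 (Set.mem_univ x) (Set.mem_univ (x + d)) (by linarith [hα.2]) hα.1.le
        (by ring)
    rw [hcomb, smul_eq_mul, smul_eq_mul] at hconv
    rw [div_le_iff₀ hα.1]
    nlinarith [hconv]
  -- upper bound for F'
  have hFle : ∀ (j : Fin m) (d : EuclideanSpace ℝ (Fin n)),
      F' j d ≤ ⟪gradient (f j) x, d⟫ + (g j (x + d) - g j x) := by
    intro j d
    have hlim2 : Tendsto (fun α : ℝ => (f j (x + α • d) - f j x) / α + (g j (x + d) - g j x))
        (𝓝[>] (0:ℝ)) (𝓝 (⟪gradient (f j) x, d⟫ + (g j (x + d) - g j x))) :=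
      (lim_f (f j) (hf_smooth j) x d).add tendsto_const_nhds
    refine le_of_tendsto_of_tendsto (hF' j d) hlim2 ?_
    filter_upwards [Ioc_mem_nhdsGT_of_mem (by norm_num : (0:ℝ) ∈ Set.Ico 0 1)] with α hα
    have key := hgq j d α hα
    have : (F j (x + α • d) - F j x) / α
        = (f j (x + α • d) - f j x) / α + (g j (x + α • d) - g j x) / α := by
      rw [hF, hF]; ring
    rw [this]
    linarith
  -- g quotient tends to F' - inner
  have hgt : ∀ (j : Fin m) (d : EuclideanSpace ℝ (Fin n)),
      Tendsto (fun α : ℝ => (g j (x + α • d) - g j x) / α) (𝓝[>] (0:ℝ))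
        (𝓝 (F' j d - ⟪gradient (f j) x, d⟫)) := by
    intro j d
    have := (hF' j d).sub (lim_f (f j) (hf_smooth j) x d)
    refine this.congr (fun α => ?_)
    rw [hF, hF]; ring
  -- backward direction: noncritical → Q d0 < 0
  have hback : (∃ d : EuclideanSpace ℝ (Fin n), ∀ j, F' j d < 0) → Q d0 < 0 := by
    rintro ⟨d, hd⟩
    have hTj : ∀ j : Fin m, Tendsto (fun α : ℝ =>
        ⟪gradient (f j) x, d⟫ + (α / 2) * ⟪d, B j d⟫ + (g j (x + α • d) - g j x) / α)
        (𝓝[>] (0:ℝ)) (𝓝 (F' j d)) := by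
      intro j
      have h0 : Tendsto (fun α : ℝ => (α / 2) * ⟪d, B j d⟫) (𝓝[>] (0:ℝ)) (𝓝 0) := by
        have h00 : Tendsto (fun α : ℝ => (α / 2) * ⟪d, B j d⟫) (𝓝 (0:ℝ))
            (𝓝 (((0:ℝ) / 2) * ⟪d, B j d⟫)) :=
          ((continuous_id.div_const 2).mul continuous_const).tendsto 0
        simpa using h00.mono_left nhdsWithin_le_nhds
      have hsum : Tendsto (fun α : ℝ => ⟪gradient (f j) x, d⟫ + (α / 2) * ⟪d, B j d⟫
          + (g j (x + α • d) - g j x) / α) (𝓝[>] (0:ℝ))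
          (𝓝 (⟪gradient (f j) x, d⟫ + 0 + (F' j d - ⟪gradient (f j) x, d⟫))) :=
        (tendsto_const_nhds.add h0).add (hgt j d)
      have he : ⟪gradient (f j) x, d⟫ + 0 + (F' j d - ⟪gradient (f j) x, d⟫) = F' j d := by
        ring
      rwa [he] at hsum
    have hev : ∀ᶠ α : ℝ in 𝓝[>] (0:ℝ), ∀ j : Fin m,
        ⟪gradient (f j) x, d⟫ + (α / 2) * ⟪d, B j d⟫ + (g j (x + α • d) - g j x) / α < 0 := by
      rw [eventually_all]
      intro j
      exact (hTj j).eventually_lt_const (hd j)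
    have hfeas : ∀ᶠ α : ℝ in 𝓝[>] (0:ℝ), α * ‖d‖ ≤ Δ := by
      have : Tendsto (fun α : ℝ => α * ‖d‖) (𝓝[>] (0:ℝ)) (𝓝 (0 * ‖d‖)) :=
        ((continuous_id.mul continuous_const).tendsto 0).mono_left nhdsWithin_le_nhds
      rw [zero_mul] at this
      exact (this.eventually_lt_const hΔ).mono fun α h => h.le
    have hpos : ∀ᶠ α : ℝ in 𝓝[>] (0:ℝ), (0:ℝ) < α := eventually_mem_nhdsWithin
    obtain ⟨α, hα1, hα2, hα3⟩ := (hev.and (hfeas.and hpos)).exists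
    -- Q (α • d) < 0
    have hterm : ∀ j : Fin m,
        ⟪gradient (f j) x, α • d⟫ + (1 / 2) * ⟪α • d, B j (α • d)⟫ + g j (x + α • d) - g j x
          < 0 := by
      intro j
      have hBsm : ⟪α • d, B j (α • d)⟫ = α * (α * ⟪d, B j d⟫) := by
        rw [map_smul, real_inner_smul_left, real_inner_smul_right]
      have hism : ⟪gradient (f j) x, α • d⟫ = α * ⟪gradient (f j) x, d⟫ :=
        real_inner_smul_right _ _ _
      have hfac : ⟪gradient (f j) x, α • d⟫ + (1 / 2) * ⟪α • d, B j (α • d)⟫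
            + g j (x + α • d) - g j x
          = α * (⟪gradient (f j) x, d⟫ + (α / 2) * ⟪d, B j d⟫
            + (g j (x + α • d) - g j x) / α) := by
        rw [hBsm, hism]
        field_simp
        ring
      rw [hfac]
      exact mul_neg_of_pos_of_neg hα3 (hα1 j)
    have hQα : Q (α • d) < 0 := by
      rw [hQ]
      exact (Finset.sup'_lt_iff _).mpr fun j _ => hterm j
    refine lt_of_le_of_lt (hd0_min (α • d) ?_) hQα
    rw [norm_smul, Real.norm_eq_abs, abs_of_pos hα3]
    exact hα2
  -- forward direction: Q d0 < 0 → noncritical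
  have hfor : Q d0 < 0 → ∃ d : EuclideanSpace ℝ (Fin n), ∀ j, F' j d < 0 := by
    intro hneg
    refine ⟨d0, fun j => ?_⟩
    have hd0ne : d0 ≠ 0 := by
      rintro rfl
      rw [hQ0] at hneg
      exact lt_irrefl 0 hneg
    have hBpos : 0 < ⟪d0, B j d0⟫ := hB_posdef j d0 hd0ne
    have hle : ⟪gradient (f j) x, d0⟫ + (1 / 2) * ⟪d0, B j d0⟫ + g j (x + d0) - g j x
        ≤ Q d0 := by
      rw [hQ]
      exact Finset.le_sup' (fun j : Fin m => ⟪gradient (f j) x, d0⟫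
        + (1 / 2) * ⟪d0, B j d0⟫ + g j (x + d0) - g j x) (Finset.mem_univ j)
    have := hFle j d0
    linarith
  have hiff : Q d0 < 0 ↔ ¬ (∀ d : EuclideanSpace ℝ (Fin n), ∃ j, 0 ≤ F' j d) := by
    constructor
    · intro h hall
      obtain ⟨d, hd⟩ := hfor h
      obtain ⟨j, hj⟩ := hall d
      exact absurd hj (not_le.mpr (hd j))
    · intro h
      push_neg at h
      obtain ⟨d, hd⟩ := h
      exact hback ⟨d, fun j => hd j⟩
  refine ⟨h1, hiff, ?_⟩
  constructor
  · intro h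
    by_contra hc
    have := hiff.mpr hc
    rw [h] at this
    exact lt_irrefl 0 this
  · intro h
    exact le_antisymm h1 (not_lt.mp fun hlt => (hiff.mp hlt) h)
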